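/- arXiv:1304.5438 — 4 statements merged into one kernel-verified Lean document; each statement's English description precedes it below -/
import Mathlib

section
/- Let (G,v₀,W) be a Banach–Mazur game on a finite graph. Player 0 has a length-counting winning strategy for (G,v₀,W) if and only if Player 0 has a winning strategy for (G,v₀,W). -/
open MeasureTheory
open scoped ENNReal NNReal

namespace BMGame

variable {V : Type*}

/-- The prefix of length `n` of the infinite sequence `ρ`. -/
def pref (ρ : ℕ → V) (n : ℕ) : List V := (List.range n).map ρ

/-- `ρ` is an infinite path of the graph `E` starting at `v₀`. -/
def IsPlay (E : V → V → Prop) (v₀ : V) (ρ : ℕ → V) : Prop :=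
  ρ 0 = v₀ ∧ ∀ n, E (ρ n) (ρ (n + 1))

/-- `π` is a nonempty finite path of the graph `E` starting at `v₀` (a position of the game). -/
def IsPos (E : V → V → Prop) (v₀ : V) (π : List V) : Prop :=
  π.head? = some v₀ ∧ π.Chain' E

/-- A strategy for player 0 assigns to each position the (nonempty) block of vertices
appended by player 0's move; `(π ++ f π).Chain' E` says that this block is a path
starting at the last vertex of `π`. -/
def IsStrategy (E : V → V → Prop) (v₀ : V) (f : List V → List V) : Prop :=
  ∀ π, IsPos E v₀ π → f π ≠ [] ∧ (π ++ f π).Chain' E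

/-- The play `ρ` is consistent with the strategy `f`: there are cut points
`c 0, c 1, …` (the lengths of the prefixes built after each move of player 1) such that
after each such prefix player 0 plays according to `f`, and player 1 then appends a
nonempty block. -/
def ConsGen (f : List V → List V) (ρ : ℕ → V) : Prop :=
  ∃ c : ℕ → ℕ, 1 ≤ c 0 ∧ ∀ i,
    pref ρ (c i + (f (pref ρ (c i))).length) = pref ρ (c i) ++ f (pref ρ (c i)) ∧
    c i + (f (pref ρ (c i))).length < c (i + 1)

/-- `f` is a winning strategy for player 0 in the Banach–Mazur game `(E, v₀, W)`. -/
def WinningStrategy (E : V → V → Prop) (v₀ : V) (W : Set (ℕ → V))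
    (f : List V → List V) : Prop :=
  IsStrategy E v₀ f ∧ ∀ ρ, IsPlay E v₀ ρ → ConsGen f ρ → ρ ∈ W

/-- The strategy `f` is `b`-bounded: each of its moves has length at most `b`. -/
def BoundedBy (E : V → V → Prop) (v₀ : V) (b : ℕ) (f : List V → List V) : Prop :=
  ∀ π, IsPos E v₀ π → (f π).length ≤ b

/-- A positional strategy assigns to each vertex the nonempty block appended. -/
def IsPositional (E : V → V → Prop) (f : V → List V) : Prop :=
  ∀ v, f v ≠ [] ∧ (v :: f v).Chain' E

/-- Consistency with a positional strategy: after each prefix chosen by player 1,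
player 0 plays `f` of the current (last) vertex. -/
def ConsPositional (f : V → List V) (ρ : ℕ → V) : Prop :=
  ∃ c : ℕ → ℕ, 1 ≤ c 0 ∧ ∀ i,
    pref ρ (c i + (f (ρ (c i - 1))).length) = pref ρ (c i) ++ f (ρ (c i - 1)) ∧
    c i + (f (ρ (c i - 1))).length < c (i + 1)

def PositionalWinning (E : V → V → Prop) (v₀ : V) (W : Set (ℕ → V)) (f : V → List V) : Prop :=
  IsPositional E f ∧ ∀ ρ, IsPlay E v₀ ρ → ConsPositional f ρ → ρ ∈ W

/-- Structural requirement shared by move-counting and length-counting strategies: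
for `n ≥ 1`, `h v n` is a nonempty block forming a path from `v`. -/
def IsCountingStrategy (E : V → V → Prop) (h : V → ℕ → List V) : Prop :=
  ∀ v n, 1 ≤ n → h v n ≠ [] ∧ (v :: h v n).Chain' E

/-- Consistency with a move-counting strategy: at its `i`-th move (`i ≥ 1`) player 0 plays
`h (current vertex) i`. -/
def ConsMoveCounting (h : V → ℕ → List V) (ρ : ℕ → V) : Prop :=
  ∃ c : ℕ → ℕ, 1 ≤ c 0 ∧ ∀ i,
    pref ρ (c i + (h (ρ (c i - 1)) (i + 1)).length) = pref ρ (c i) ++ h (ρ (c i - 1)) (i + 1) ∧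
    c i + (h (ρ (c i - 1)) (i + 1)).length < c (i + 1)

def MoveCountingWinning (E : V → V → Prop) (v₀ : V) (W : Set (ℕ → V))
    (h : V → ℕ → List V) : Prop :=
  IsCountingStrategy E h ∧ ∀ ρ, IsPlay E v₀ ρ → ConsMoveCounting h ρ → ρ ∈ W

/-- Consistency with a length-counting strategy: after a prefix of length `c i`
player 0 plays `h (current vertex) (c i)`. -/
def ConsLengthCounting (h : V → ℕ → List V) (ρ : ℕ → V) : Prop :=
  ∃ c : ℕ → ℕ, 1 ≤ c 0 ∧ ∀ i,
    pref ρ (c i + (h (ρ (c i - 1)) (c i)).length) = pref ρ (c i) ++ h (ρ (c i - 1)) (c i) ∧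
    c i + (h (ρ (c i - 1)) (c i)).length < c (i + 1)

def LengthCountingWinning (E : V → V → Prop) (v₀ : V) (W : Set (ℕ → V))
    (h : V → ℕ → List V) : Prop :=
  IsCountingStrategy E h ∧ ∀ ρ, IsPlay E v₀ ρ → ConsLengthCounting h ρ → ρ ∈ W

/-- The segment `ρ a, ρ (a+1), …, ρ (b-1)` of an infinite sequence. -/
def seg (ρ : ℕ → V) (a b : ℕ) : List V := (List.range (b - a)).map fun j => ρ (a + j)

/-- A last-move strategy is defined on all nonempty finite paths of the graph. -/
def IsLastMove (E : V → V → Prop) (g : List V → List V) : Prop :=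
  ∀ π, π ≠ [] → π.Chain' E → g π ≠ [] ∧ (π ++ g π).Chain' E

/-- Consistency with the last-move strategy `g`: the play decomposes as
`π₁ g(π₁) π₂ g(π₂) ⋯` where the `πᵢ` are the (nonempty) moves of player 1. -/
def ConsLastMove (g : List V → List V) (ρ : ℕ → V) : Prop :=
  ∃ s e : ℕ → ℕ, s 0 = 0 ∧ (∀ i, s i < e i) ∧ ∀ i,
    seg ρ (e i) (e i + (g (seg ρ (s i) (e i))).length) = g (seg ρ (s i) (e i)) ∧
    s (i + 1) = e i + (g (seg ρ (s i) (e i))).length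

def LastMoveWinning (E : V → V → Prop) (v₀ : V) (W : Set (ℕ → V)) (g : List V → List V) : Prop :=
  IsLastMove E g ∧ ∀ ρ, IsPlay E v₀ ρ → ConsLastMove g ρ → ρ ∈ W

/-- The cylinder generated by the finite word `π`. -/
def Cyl (π : List V) : Set (ℕ → V) := {ρ | pref ρ π.length = π}

/-- One-step transition probabilities obtained from the weights `w`. -/
noncomputable def transP [Fintype V] (E : V → V → Prop) (w : V → V → ℝ≥0) (u v : V) : ℝ≥0∞ := by
  classical
  exact if E u v then
    (w u v : ℝ≥0∞) / ∑ x ∈ Finset.univ.filter (fun x => E u x), (w u x : ℝ≥0∞)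
  else 0

/-- The probability of the cylinder generated by a finite word: the product of the
one-step transition probabilities along it. -/
noncomputable def pathP [Fintype V] (E : V → V → Prop) (w : V → V → ℝ≥0) (π : List V) : ℝ≥0∞ :=
  ((π.zip π.tail).map fun q => transP E w q.1 q.2).prod

/-- `P` is the reasonable probability measure associated with the weights `w`. -/
def IsReasonable [Fintype V] [MeasurableSpace (ℕ → V)] (E : V → V → Prop) (v₀ : V)
    (w : V → V → ℝ≥0) (P : Measure (ℕ → V)) : Prop :=
  IsProbabilityMeasure P ∧ ∀ π : List V, π.head? = some v₀ → P (Cyl π) = pathP E w π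

/-- `Ps` is a legal move of player 0 in the generalised game `G_α` at position `π`: a
finite nonempty set of nonempty finite paths from the last vertex of `π` whose union of
cylinders has conditional probability at least `α` given `Cyl π`. -/
def LegalProposal [MeasurableSpace (ℕ → V)] (E : V → V → Prop) (P : Measure (ℕ → V)) (α : ℝ)
    (π : List V) (Ps : Finset (List V)) : Prop :=
  Ps.Nonempty ∧ (∀ τ ∈ Ps, τ ≠ [] ∧ (π ++ τ).Chain' E) ∧
    ENNReal.ofReal α ≤ P (⋃ τ ∈ Ps, Cyl (π ++ τ)) / P (Cyl π)

/-- An α-strategy for player 0. -/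
def IsAlphaStrategy [MeasurableSpace (ℕ → V)] (E : V → V → Prop) (v₀ : V) (P : Measure (ℕ → V))
    (α : ℝ) (f : List V → Finset (List V)) : Prop :=
  ∀ π, IsPos E v₀ π → LegalProposal E P α π (f π)

/-- Consistency with an α-strategy: at each stage, player 1 picks some element of the
set proposed by player 0 and appends a nonempty block after it. -/
def ConsAlpha (f : List V → Finset (List V)) (ρ : ℕ → V) : Prop :=
  ∃ c : ℕ → ℕ, 1 ≤ c 0 ∧ ∀ i, ∃ τ ∈ f (pref ρ (c i)),
    pref ρ (c i + τ.length) = pref ρ (c i) ++ τ ∧ c i + τ.length < c (i + 1)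

def AlphaWinning [MeasurableSpace (ℕ → V)] (E : V → V → Prop) (v₀ : V) (P : Measure (ℕ → V))
    (α : ℝ) (W : Set (ℕ → V)) (f : List V → Finset (List V)) : Prop :=
  IsAlphaStrategy E v₀ P α f ∧ ∀ ρ, IsPlay E v₀ ρ → ConsAlpha f ρ → ρ ∈ W

/-- A strategy for player 1 in the generalised game `G_α` consists of an initial path and,
for each position together with a legal proposal of player 0, the selected element of the
proposal and the next (nonempty) block played by player 1. -/
def IsP1Strategy [MeasurableSpace (ℕ → V)] (E : V → V → Prop) (v₀ : V) (P : Measure (ℕ → V))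
    (α : ℝ) (init : List V) (g : List V → Finset (List V) → List V × List V) : Prop :=
  IsPos E v₀ init ∧
    ∀ π Ps, IsPos E v₀ π → LegalProposal E P α π Ps →
      (g π Ps).1 ∈ Ps ∧ (g π Ps).2 ≠ [] ∧ (π ++ ((g π Ps).1 ++ (g π Ps).2)).Chain' E

/-- Consistency of a play with player 1's strategy `(init, g)`:
there is a sequence of legal proposals of player 0 generating the play. -/
def ConsP1 [MeasurableSpace (ℕ → V)] (E : V → V → Prop) (P : Measure (ℕ → V)) (α : ℝ)
    (init : List V) (g : List V → Finset (List V) → List V × List V) (ρ : ℕ → V) : Prop :=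
  ∃ (Ps : ℕ → Finset (List V)) (p : ℕ → List V), p 0 = init ∧
    (∀ n, pref ρ (p n).length = p n) ∧
    ∀ n, LegalProposal E P α (p n) (Ps n) ∧
      p (n + 1) = p n ++ ((g (p n) (Ps n)).1 ++ (g (p n) (Ps n)).2)

def P1Winning [MeasurableSpace (ℕ → V)] (E : V → V → Prop) (v₀ : V) (P : Measure (ℕ → V))
    (α : ℝ) (W : Set (ℕ → V)) (init : List V)
    (g : List V → Finset (List V) → List V × List V) : Prop :=
  IsP1Strategy E v₀ P α init g ∧ ∀ ρ, IsPlay E v₀ ρ → ConsP1 E P α init g ρ → ρ ∉ W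

/-- A union of cylinders, i.e. an open subset of the space of sequences. -/
def IsCylOpen (U : Set (ℕ → V)) : Prop :=
  ∃ S : Set (List V), U = ⋃ π ∈ S, Cyl π

/-- `W` is a countable intersection of open subsets of the space `Paths (G, v₀)`. -/
def IsCountableInterOfOpens (E : V → V → Prop) (v₀ : V) (W : Set (ℕ → V)) : Prop :=
  ∃ U : ℕ → Set (ℕ → V), (∀ n, IsCylOpen (U n)) ∧
    W = {ρ | IsPlay E v₀ ρ} ∩ ⋂ n, U n

/-- For every `n`, the concatenation of the blocks `u 0, …, u (n-1)` is a prefix of `ρ`. -/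
def AgreesWithBlocks (ρ : ℕ → V) (u : ℕ → List V) : Prop :=
  ∀ n, pref ρ (((List.range n).map u).flatten).length = ((List.range n).map u).flatten

end BMGame

open BMGame

/-!
A length-counting strategy `h` is in particular a strategy: answer the position `π` by
`h (last vertex of π) (length of π)`.

Conversely, let `f` be a winning strategy. On a finite graph there are only finitely many
positions `π₁, …, π_k` of length `n` ending at `v`, and the length-counting move at `(v, n)`
answers all of them in turn: starting from one edge `B₀` out of `v`, it plays
`B_k` where `B_{j+1} = B_j ++ f (π_j ++ B_j)`. Whichever `π_j` is the actual position, the play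
passes through `π_j ++ B_j` and then follows `f` there. So every play consistent with the
length-counting strategy follows `f` infinitely often, hence is consistent with `f` and won.
-/

namespace BMGame

variable {V : Type*} {E : V → V → Prop} {v₀ : V}

lemma length_pref (ρ : ℕ → V) (n : ℕ) : (pref ρ n).length = n := by
  simp [pref]

lemma getLast?_pref (ρ : ℕ → V) {n : ℕ} (hn : 0 < n) :
    (pref ρ n).getLast? = some (ρ (n - 1)) := by
  obtain ⟨m, rfl⟩ : ∃ m, n = m + 1 := ⟨n - 1, by omega⟩
  simp [pref, List.range_succ]

lemma take_pref (ρ : ℕ → V) (m n : ℕ) : (pref ρ n).take m = pref ρ (min m n) := by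
  simp [pref, ← List.map_take, List.take_range]

lemma pref_length_of_prefix {ρ : ℕ → V} {n : ℕ} {π : List V} (h : π <+: pref ρ n) :
    pref ρ π.length = π := by
  have hle : π.length ≤ n := length_pref ρ n ▸ h.length_le
  calc pref ρ π.length = (pref ρ n).take π.length := by rw [take_pref, Nat.min_eq_left hle]
    _ = π := (List.prefix_iff_eq_take.1 h).symm

lemma IsPlay.isPos_pref {ρ : ℕ → V} (hρ : IsPlay E v₀ ρ)
    {n : ℕ} (hn : 0 < n) : IsPos E v₀ (pref ρ n) := by
  obtain ⟨m, rfl⟩ : ∃ m, n = m + 1 := ⟨n - 1, by omega⟩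
  refine ⟨by simp [pref, List.range_succ_eq_map, hρ.1], ?_⟩
  show ((List.range (m + 1)).map ρ).IsChain E
  rw [List.isChain_map]
  exact (List.isChain_range_succ _ _).2 fun k _ => hρ.2 k

lemma lt_of_one_le_of_lt_succ {c : ℕ → ℕ} (h0 : 1 ≤ c 0) (hc : ∀ i, c i < c (i + 1)) (i : ℕ) :
    i < c i := by
  induction i with
  | zero => exact h0
  | succ i ih => exact Nat.lt_of_le_of_lt ih (hc i)

lemma isChain_append_iff_cons {π σ : List V} {v : V}
    (hπ : π.IsChain E) (hv : π.getLast? = some v) :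
    (π ++ σ).IsChain E ↔ (v :: σ).IsChain E := by
  simp [List.isChain_append, List.isChain_cons, hπ, hv, and_comm]

def ofLengthCounting (v₀ : V) (h : V → ℕ → List V) (π : List V) : List V :=
  h (π.getLastD v₀) π.length

lemma ofLengthCounting_pref (v₀ : V) (h : V → ℕ → List V) (ρ : ℕ → V) {n : ℕ} (hn : 0 < n) :
    ofLengthCounting v₀ h (pref ρ n) = h (ρ (n - 1)) n := by
  simp [ofLengthCounting, List.getLastD_eq_getLast?, getLast?_pref ρ hn, length_pref]

lemma IsCountingStrategy.isStrategy_ofLengthCounting {h : V → ℕ → List V} (hh : IsCountingStrategy E h) :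
    IsStrategy E v₀ (ofLengthCounting v₀ h) := by
  rintro π ⟨hhead, hchain⟩
  obtain ⟨u, hu⟩ : ∃ u, π.getLast? = some u :=
    Option.isSome_iff_exists.1 (by cases π <;> simp_all)
  have hlen : 1 ≤ π.length := by cases π <;> simp_all
  have hD : π.getLastD v₀ = u := by simp [List.getLastD_eq_getLast?, hu]
  obtain ⟨hne, hstep⟩ := hh u π.length hlen
  simp only [ofLengthCounting, hD]
  exact ⟨hne, (isChain_append_iff_cons hchain hu).2 hstep⟩

lemma LengthCountingWinning.winningStrategy_ofLengthCounting {W : Set (ℕ → V)}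
    {h : V → ℕ → List V} (hh : LengthCountingWinning E v₀ W h) :
    WinningStrategy E v₀ W (ofLengthCounting v₀ h) := by
  refine ⟨hh.1.isStrategy_ofLengthCounting, fun ρ hρ ⟨c, hc0, hc⟩ => hh.2 ρ hρ ⟨c, hc0, ?_⟩⟩
  have hpos (i : ℕ) : 0 < c i :=
    Nat.zero_lt_of_lt <| lt_of_one_le_of_lt_succ hc0
      (fun j => (Nat.le_add_right _ _).trans_lt (hc j).2) i
  simpa only [ofLengthCounting_pref v₀ h ρ (hpos _)] using hc

def FollowsAt (f : List V → List V) (ρ : ℕ → V) (m : ℕ) : Prop :=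
  pref ρ (m + (f (pref ρ m)).length) = pref ρ m ++ f (pref ρ m)

lemma followsAt_length_of_prefix {f : List V → List V} {ρ : ℕ → V} {π : List V} {n : ℕ}
    (h : π ++ f π <+: pref ρ n) : FollowsAt f ρ π.length := by
  have hπ : pref ρ π.length = π := pref_length_of_prefix ((List.prefix_append _ _).trans h)
  rw [FollowsAt, hπ, ← List.length_append, pref_length_of_prefix h]

lemma consGen_of_followsAt {f : List V → List V} {ρ : ℕ → V}
    (H : ∀ N, ∃ m, N < m ∧ FollowsAt f ρ m) : ConsGen f ρ := by
  choose m hm hfollows using H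
  -- each cut is a point where `ρ` follows `f`, beyond the end of `f`'s previous answer
  refine ⟨fun i => Nat.rec (m 0) (fun _ k => m (k + (f (pref ρ k)).length)) i, ?_,
    fun i => ⟨?_, hm _⟩⟩
  · exact hm 0
  · cases i <;> exact hfollows _

def extendBlock (f : List V → List V) (L : List (List V)) (B : List V) : List V :=
  L.foldl (fun B π => B ++ f (π ++ B)) B

lemma prefix_extendBlock (f : List V → List V) (L : List (List V)) (B : List V) :
    B <+: extendBlock f L B := by
  induction L generalizing B with
  | nil => exact List.prefix_rfl
  | cons π L ih => exact (List.prefix_append _ _).trans (ih _)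

lemma exists_prefix_extendBlock (f : List V → List V) {L : List (List V)} {π : List V}
    (hπ : π ∈ L) (B : List V) : ∃ B₁, B₁ ++ f (π ++ B₁) <+: extendBlock f L B := by
  induction L generalizing B with
  | nil => cases hπ
  | cons σ L ih =>
    rcases List.mem_cons.1 hπ with rfl | hπ
    · exact ⟨B, prefix_extendBlock f L _⟩
    · exact ih hπ _

lemma isChain_cons_extendBlock {f : List V → List V}
    (hf : IsStrategy E v₀ f) {v : V} {L : List (List V)}
    (hL : ∀ π ∈ L, IsPos E v₀ π ∧ π.getLast? = some v) {B : List V}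
    (hB : (v :: B).IsChain E) : (v :: extendBlock f L B).IsChain E := by
  induction L generalizing B with
  | nil => exact hB
  | cons π L ih =>
    obtain ⟨⟨hhead, hπ⟩, hv⟩ := hL π List.mem_cons_self
    have hπB : IsPos E v₀ (π ++ B) :=
      ⟨by cases π <;> simp_all, (isChain_append_iff_cons hπ hv).2 hB⟩
    refine ih (fun σ hσ => hL σ (List.mem_cons_of_mem _ hσ)) ?_
    have hstep : ((π ++ B) ++ f (π ++ B)).IsChain E := (hf _ hπB).2
    rwa [List.append_assoc, isChain_append_iff_cons hπ hv] at hstep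

noncomputable def positionsEndingAt [Finite V] (E : V → V → Prop) (v₀ : V) (n : ℕ) (v : V) :
    Finset (List V) :=
  Set.Finite.toFinset (s := {π | π.length = n ∧ IsPos E v₀ π ∧ π.getLast? = some v})
    ((List.finite_length_eq V n).subset fun _ hπ => hπ.1)

lemma mem_positionsEndingAt [Finite V] {n : ℕ} {v : V} {π : List V} :
    π ∈ positionsEndingAt E v₀ n v ↔ π.length = n ∧ IsPos E v₀ π ∧ π.getLast? = some v :=
  Set.Finite.mem_toFinset _

noncomputable def toLengthCounting [Finite V] (E : V → V → Prop) (v₀ : V) (f : List V → List V)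
    (s : V → V) (v : V) (n : ℕ) : List V :=
  extendBlock f (positionsEndingAt E v₀ n v).toList [s v]

variable [Finite V] {f : List V → List V} {s : V → V}

lemma IsStrategy.isCountingStrategy_toLengthCounting (hf : IsStrategy E v₀ f)
    (hs : ∀ v, E v (s v)) : IsCountingStrategy E (toLengthCounting E v₀ f s) := by
  refine fun v n _ => ⟨List.ne_nil_of_length_pos ?_, ?_⟩
  · exact Nat.lt_of_lt_of_le (by simp) (prefix_extendBlock f _ [s v]).length_le
  · refine isChain_cons_extendBlock hf (fun π hπ => ?_) (by simp [hs v])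
    exact (mem_positionsEndingAt.1 (Finset.mem_toList.1 hπ)).2

lemma followsAt_of_consLengthCounting {ρ : ℕ → V} (hρ : IsPlay E v₀ ρ)
    (hcons : ConsLengthCounting (toLengthCounting E v₀ f s) ρ) (N : ℕ) :
    ∃ m, N < m ∧ FollowsAt f ρ m := by
  obtain ⟨c, hc0, hc⟩ := hcons
  have hN : N < c N :=
    lt_of_one_le_of_lt_succ hc0 (fun j => (Nat.le_add_right _ _).trans_lt (hc j).2) N
  set n := c N
  set π := pref ρ n
  have hπ : π ∈ (positionsEndingAt E v₀ n (ρ (n - 1))).toList :=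
    Finset.mem_toList.2 <| mem_positionsEndingAt.2
      ⟨length_pref _ _, hρ.isPos_pref (by omega), getLast?_pref _ (by omega)⟩
  obtain ⟨B₁, hB₁⟩ := exists_prefix_extendBlock f hπ [s (ρ (n - 1))]
  have hprefix : (π ++ B₁) ++ f (π ++ B₁) <+:
      pref ρ (n + (toLengthCounting E v₀ f s (ρ (n - 1)) n).length) := by
    rw [(hc N).1, List.append_assoc, List.prefix_append_right_inj]
    exact hB₁
  exact ⟨(π ++ B₁).length, by simp [π, length_pref]; omega, followsAt_length_of_prefix hprefix⟩

lemma WinningStrategy.lengthCountingWinning_toLengthCounting {W : Set (ℕ → V)}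
    (hf : WinningStrategy E v₀ W f) (hs : ∀ v, E v (s v)) :
    LengthCountingWinning E v₀ W (toLengthCounting E v₀ f s) :=
  ⟨hf.1.isCountingStrategy_toLengthCounting hs, fun ρ hρ hcons =>
    hf.2 ρ hρ (consGen_of_followsAt (followsAt_of_consLengthCounting hρ hcons))⟩

end BMGame

theorem stmt0_general {V : Type*} [Fintype V] (E : V → V → Prop) (hE : ∀ v, ∃ u, E v u)
    (v₀ : V) (W : Set (ℕ → V)) :
    (∃ h : V → ℕ → List V, LengthCountingWinning E v₀ W h) ↔
      ∃ f : List V → List V, WinningStrategy E v₀ W f := by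
  choose s hs using hE
  exact ⟨fun ⟨h, hh⟩ => ⟨_, hh.winningStrategy_ofLengthCounting⟩,
    fun ⟨f, hf⟩ => ⟨_, hf.lengthCountingWinning_toLengthCounting hs⟩⟩

/-- Player 0 has a length-counting winning strategy for the Banach–Mazur game `(G, v₀, W)`
on a finite graph if and only if Player 0 has a winning strategy for it. -/
theorem stmt0 {V : Type*} [Fintype V] (E : V → V → Prop) (hE : ∀ v, ∃ u, E v u)
    (v₀ : V) (W : Set (ℕ → V)) (hW : W ⊆ {ρ | IsPlay E v₀ ρ}) :
    (∃ h : V → ℕ → List V, LengthCountingWinning E v₀ W h) ↔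
      ∃ f : List V → List V, WinningStrategy E v₀ W f :=
  stmt0_general E hE v₀ W
end

section
/- Let W = {w₀w₀^R w₁w₁^R w₂w₂^R ⋯ : each wᵢ is a nonempty finite word over {0,1,2}} ∩ Paths(G_{0,1,2}, 2), where σ^R denotes the reverse of the finite word σ, and let P be the reasonable probability measure on Paths(G_{0,1,2},2) given by the weights w_e = 1 for every edge e (so each step is uniform over the 3 successors). Then P(W) = 0, i.e., W is P-null. -/
open MeasureTheory
open scoped ENNReal NNReal

open BMGame

/-- The complete directed graph on `{0,1,2}` (all edges, including self-loops). -/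
def E3 : Fin 3 → Fin 3 → Prop := fun _ _ => True

/-- The set of infinite paths from `2` in `G_{0,1,2}` of the form `w₀w₀ᴿw₁w₁ᴿw₂w₂ᴿ⋯`
with each `wᵢ` a nonempty finite word over `{0,1,2}`. -/
def W3 : Set (ℕ → Fin 3) :=
  {ρ | IsPlay E3 2 ρ ∧ ∃ w : ℕ → List (Fin 3), (∀ i, w i ≠ []) ∧
    AgreesWithBlocks ρ fun i => w i ++ (w i).reverse}

/-!
Every play in `W3` begins, for every `m`, with a word `w₀w₀ᴿ⋯w_{m-1}w_{m-1}ᴿ` whose blocks `wᵢ`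
are nonempty. A cylinder of length `L` has probability at most `3^{1-L}`, and there are `3ⁿ`
doubled blocks `w wᴿ` of length `2n`, so in the union bound each block contributes a factor
`∑_{n ≥ 1} 3ⁿ 3^{-2n} = 1/2`: `P W3 ≤ 3 · 2^{-m}` for every `m`.
-/

open Filter Topology

namespace ENNReal

theorem tsum_fin_pi_prod {β : Type*} (f : β → ℝ≥0∞) (m : ℕ) :
    ∑' g : Fin m → β, ∏ i, f (g i) = (∑' b, f b) ^ m := by
  induction m with
  | zero => simp
  | succ m ih =>
    rw [← (Fin.consEquiv fun _ => β).tsum_eq, pow_succ', ← ih, ← ENNReal.tsum_mul_right]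
    simp only [Fin.consEquiv_apply, Fin.prod_univ_succ, Fin.cons_zero, Fin.cons_succ]
    rw [ENNReal.tsum_prod (f := fun (b : β) (g : Fin m → β) => f b * ∏ i, f (g i))]
    exact tsum_congr fun b => ENNReal.tsum_mul_left

section Words

variable {α : Type*} [Fintype α]

theorem tsum_pow_length (x : ℝ≥0∞) :
    ∑' w : List α, x ^ w.length = ∑' n : ℕ, (Fintype.card α * x) ^ n := by
  rw [← List.equivSigmaTuple.symm.tsum_eq,
    ENNReal.tsum_sigma fun n (f : Fin n → α) => x ^ (List.equivSigmaTuple.symm ⟨n, f⟩).length]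
  refine tsum_congr fun n => ?_
  simp [List.equivSigmaTuple, mul_pow]

theorem tsum_pow_length_cons (x : ℝ≥0∞) :
    ∑' p : α × List α, x ^ (p.1 :: p.2).length = ∑' n : ℕ, (Fintype.card α * x) ^ (n + 1) := by
  calc ∑' p : α × List α, x ^ (p.1 :: p.2).length
      = ∑' (_ : α) (w : List α), x * x ^ w.length := by
        rw [← ENNReal.tsum_prod]
        simp only [List.length_cons, pow_succ']
    _ = Fintype.card α * x * ∑' n : ℕ, (Fintype.card α * x) ^ n := by
        simp only [ENNReal.tsum_mul_left, tsum_pow_length, ENNReal.tsum_const,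
          ENat.card_eq_coe_fintype_card, ENat.toENNReal_coe]
        ring
    _ = ∑' n : ℕ, (Fintype.card α * x) ^ (n + 1) := by
        simp only [pow_succ', ENNReal.tsum_mul_left]

end Words

theorem tsum_inv_three_pow_succ : ∑' n : ℕ, (3⁻¹ : ℝ≥0∞) ^ (n + 1) = 2⁻¹ := by
  have h : (1 : ℝ≥0∞) - 3⁻¹ = 2 / 3 := by
    refine ENNReal.sub_eq_of_eq_add (by simp) ?_
    rw [inv_eq_one_div, ENNReal.div_add_div_same]
    norm_num
    exact (ENNReal.div_self (by norm_num) (by norm_num)).symm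
  rw [ENNReal.tsum_geometric_add_one, h, ENNReal.inv_div (by simp) (by simp),
    ENNReal.div_eq_inv_mul, mul_comm 2⁻¹, ← mul_assoc,
    ENNReal.inv_mul_cancel (by norm_num) (by norm_num), one_mul]

end ENNReal

def palindromeConcat {α : Type*} {m : ℕ} (w : Fin m → List α) : List α :=
  (List.ofFn fun i => w i ++ (w i).reverse).flatten

theorem length_palindromeConcat {α : Type*} {m : ℕ} (w : Fin m → List α) :
    (palindromeConcat w).length = ∑ i, 2 * (w i).length := by
  simp [palindromeConcat, List.length_flatten, Function.comp_def, List.sum_ofFn, two_mul]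

namespace BMGame

variable {V : Type*}

theorem cyl_singleton (a : V) : Cyl [a] = {ρ : ℕ → V | ρ 0 = a} := by
  ext ρ
  simp [Cyl, pref]

theorem apply_zero_of_mem_cyl_cons {ρ : ℕ → V} {a : V} {t : List V} (h : ρ ∈ Cyl (a :: t)) :
    ρ 0 = a := by
  have h' : pref ρ (t.length + 1) = a :: t := h
  exact (by simpa [pref, List.range_succ_eq_map] using h' : ρ 0 = a ∧ _).1

end BMGame

namespace W3

theorem pathP_uniform (π : List (Fin 3)) :
    pathP E3 (fun _ _ => 1) π = 3⁻¹ ^ (π.length - 1) := by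
  have hE : ∀ u v, E3 u v := fun _ _ => trivial
  have htrans : ∀ u v : Fin 3, transP E3 (fun _ _ => 1) u v = 3⁻¹ := fun u v => by
    simp [transP, hE]
  rw [pathP, List.map_congr_left (fun q _ => htrans q.1 q.2), List.map_const',
    List.prod_replicate, List.length_zip, List.length_tail]
  congr 1
  omega

variable {P : Measure (ℕ → Fin 3)}

theorem ae_apply_zero_eq (hP : IsReasonable E3 2 (fun _ _ => 1) P) : ∀ᵐ ρ ∂P, ρ 0 = 2 := by
  have := hP.1
  have hstart : P {ρ | ρ 0 = 2} = 1 := by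
    rw [← cyl_singleton, hP.2 [2] rfl, pathP_uniform]
    simp
  exact ae_iff.mpr <| (prob_compl_eq_zero_iff <|
    measurable_pi_apply 0 (measurableSet_singleton 2)).mpr hstart

theorem measure_cyl_le (hP : IsReasonable E3 2 (fun _ _ => 1) P) (π : List (Fin 3)) :
    P (Cyl π) ≤ 3 * 3⁻¹ ^ π.length := by
  have := hP.1
  rcases π with _ | ⟨a, t⟩
  · calc P (Cyl []) ≤ 1 := prob_le_one
      _ ≤ 3 * 3⁻¹ ^ 0 := by norm_num
  by_cases ha : a = 2
  · subst ha
    rw [hP.2 _ rfl, pathP_uniform, List.length_cons, pow_succ', ← mul_assoc,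
      ENNReal.mul_inv_cancel (by norm_num) (by norm_num), one_mul]
    rfl
  · have hnull : P (Cyl (a :: t)) = 0 :=
      measure_mono_null (fun ρ hρ => (apply_zero_of_mem_cyl_cons hρ).trans_ne ha)
        (ae_iff.mp (ae_apply_zero_eq hP))
    simp [hnull]

theorem subset_iUnion_cyl (m : ℕ) :
    W3 ⊆ ⋃ ws : Fin m → Fin 3 × List (Fin 3),
      Cyl (palindromeConcat fun i => (ws i).1 :: (ws i).2) := by
  rintro ρ ⟨-, w, hw, hagree⟩
  refine Set.mem_iUnion.mpr ⟨fun i => ((w i).head (hw i), (w i).tail), ?_⟩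
  have hword : (palindromeConcat fun i : Fin m => (w i).head (hw i) :: (w i).tail) =
      ((List.range m).map fun i => w i ++ (w i).reverse).flatten := by
    simp only [List.cons_head_tail, palindromeConcat]
    rw [List.ofFn_eq_map, ← List.map_coe_finRange_eq_range, List.map_map]
    rfl
  rw [Cyl, Set.mem_ofPred_eq, hword]
  exact hagree m

theorem measure_iUnion_cyl_le (hP : IsReasonable E3 2 (fun _ _ => 1) P) (m : ℕ) :
    P (⋃ ws : Fin m → Fin 3 × List (Fin 3),
      Cyl (palindromeConcat fun i => (ws i).1 :: (ws i).2)) ≤ 3 * 2⁻¹ ^ m := by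
  have hblock : (Fintype.card (Fin 3) : ℝ≥0∞) * 3⁻¹ ^ 2 = 3⁻¹ := by
    rw [Fintype.card_fin, pow_two, ← mul_assoc, Nat.cast_ofNat,
      ENNReal.mul_inv_cancel (by norm_num) (by norm_num), one_mul]
  calc _ ≤ ∑' ws : Fin m → Fin 3 × List (Fin 3),
          P (Cyl (palindromeConcat fun i => (ws i).1 :: (ws i).2)) := measure_iUnion_le _
    _ ≤ ∑' ws : Fin m → Fin 3 × List (Fin 3),
          3 * ∏ i, (3⁻¹ ^ 2 : ℝ≥0∞) ^ ((ws i).1 :: (ws i).2).length := by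
        refine ENNReal.tsum_le_tsum fun ws => (measure_cyl_le hP _).trans_eq ?_
        simp only [length_palindromeConcat, ← Finset.prod_pow_eq_pow_sum, pow_mul]
    _ = 3 * 2⁻¹ ^ m := by
        rw [ENNReal.tsum_mul_left, ENNReal.tsum_fin_pi_prod fun p : Fin 3 × List (Fin 3) =>
          (3⁻¹ ^ 2 : ℝ≥0∞) ^ (p.1 :: p.2).length, ENNReal.tsum_pow_length_cons, hblock,
          ENNReal.tsum_inv_three_pow_succ]

end W3

/-- For the reasonable probability measure given by uniform weights on `G_{0,1,2}`,
the set `W3` is null. -/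
theorem stmt4 (P : MeasureTheory.Measure (ℕ → Fin 3))
    (hP : IsReasonable E3 2 (fun _ _ => 1) P) :
    P W3 = 0 := by
  have hbound : ∀ m, P W3 ≤ 3 * 2⁻¹ ^ m := fun m =>
    (measure_mono (W3.subset_iUnion_cyl m)).trans (W3.measure_iUnion_cyl_le hP m)
  have hlim : Tendsto (fun m : ℕ => (3 : ℝ≥0∞) * 2⁻¹ ^ m) atTop (𝓝 0) := by
    simpa using ENNReal.Tendsto.const_mul
      (ENNReal.tendsto_pow_atTop_nhds_zero_of_lt_one (by norm_num)) (Or.inr (by norm_num))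
  exact le_antisymm (ge_of_tendsto' hlim hbound) bot_le
end

section
/- Let a_n = Σ_{k=1}^n k = n(n+1)/2 and let W = {(σ_k)_{k≥1} ∈ {0,1}^ω : σ₁ = 0 and σ_{a_n} = 1 for some n > 1}. In the Banach–Mazur game (G_{0,1}, 0, W), Player 0 has no positional winning strategy, no bounded winning strategy, and no move-counting winning strategy. -/
open MeasureTheory
open scoped ENNReal NNReal

open BMGame

/-- The complete directed graph on `{0,1}` (all edges, including self-loops). -/
def E2 : Fin 2 → Fin 2 → Prop := fun _ _ => True

/-- With `a n = 1 + 2 + ⋯ + n = n (n + 1) / 2`, the set of sequences over `{0,1}` with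
`σ₁ = 0` and `σ_{a n} = 1` for some `n > 1` (sequences are `0`-indexed, `σ_i = ρ (i - 1)`). -/
def W5 : Set (ℕ → Fin 2) :=
  {ρ | ρ 0 = 0 ∧ ∃ n : ℕ, 1 < n ∧ ρ (n * (n + 1) / 2 - 1) = 1}

/-!
Player 1 only ever plays `0`, and before player 0's `i`-th move he pads the play with zeros up
to a triangular index `a_k` with `k` at least the length of that move. The gaps between
consecutive triangular numbers grow, so player 0's move lies strictly between `a_k` and
`a_{k+1}` and never touches a triangular index: the play stays outside `W5`. This works
against every strategy whose `i`-th move has length bounded in terms of `i` alone, and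
positional, bounded and move-counting strategies are all of this kind, since player 0
always moves from vertex `0`.
-/

namespace BMGame

lemma isChain_E2 (l : List (Fin 2)) : l.IsChain E2 :=
  (List.pairwise_of_forall fun _ _ => trivial).isChain

def tri (k : ℕ) : ℕ := k * (k + 1) / 2

lemma tri_succ (k : ℕ) : tri (k + 1) = tri k + (k + 1) := by
  have h2 : 2 ∣ k * (k + 1) := (Nat.even_mul_succ_self k).two_dvd
  have : (k + 1) * (k + 1 + 1) = k * (k + 1) + 2 * (k + 1) := by ring
  unfold tri
  omega

lemma tri_strictMono : StrictMono tri :=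
  strictMono_nat_of_lt_succ fun k => by rw [tri_succ]; omega

lemma le_tri (k : ℕ) : k ≤ tri k := by
  induction k with
  | zero => exact le_rfl
  | succ k ih => rw [tri_succ]; omega

lemma tri_sub_one_notMem_Ico (k n : ℕ) : tri n - 1 ∉ Set.Ico (tri k) (tri k + k) := by
  rintro ⟨hlo, hhi⟩
  have := le_tri k
  have hkn : k + 1 ≤ n := tri_strictMono.lt_iff_lt.mp (by omega)
  have := tri_strictMono.monotone hkn
  rw [tri_succ] at this
  omega

lemma exists_gap_tri (L N : ℕ) :
    ∃ g, L < g ∧ Disjoint (Set.Ico g (g + N)) (Set.range fun n => tri n - 1) := by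
  set k := max (L + 1) N
  refine ⟨tri k, by have := le_tri k; omega, Set.disjoint_right.mpr ?_⟩
  rintro _ ⟨n, rfl⟩ ⟨hlo, hhi : tri n - 1 < tri k + N⟩
  exact tri_sub_one_notMem_Ico k n ⟨hlo, by omega⟩

lemma notMem_W5_of_tri {ρ : ℕ → Fin 2}
    (hρ : ∀ m ∈ Set.range fun n => tri n - 1, ρ m = 0) : ρ ∉ W5 := by
  rintro ⟨-, n, -, hn⟩
  exact absurd ((hρ _ ⟨n, rfl⟩).symm.trans hn) (by decide)

def padZeros (l : List (Fin 2)) (n : ℕ) : List (Fin 2) := l ++ List.replicate (n - l.length) 0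

lemma length_padZeros {l : List (Fin 2)} {n : ℕ} (h : l.length ≤ n) :
    (padZeros l n).length = n := by
  simp [padZeros]; omega

lemma getElem_padZeros_of_le {l : List (Fin 2)} {n m : ℕ} (hm : l.length ≤ m)
    (h : m < (padZeros l n).length) : (padZeros l n)[m] = 0 := by
  simp [padZeros, List.getElem_append_right hm]

/-- Consistency with a strategy `M` whose `i`-th move may depend on `i`, where moreover every
move is made from vertex `0`; it implies consistency in each of the three senses of the game. -/
def IsRoundCuts (M : ℕ → List (Fin 2) → List (Fin 2)) (ρ : ℕ → Fin 2) (c : ℕ → ℕ) :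
    Prop :=
  1 ≤ c 0 ∧ ∀ i, ρ (c i - 1) = 0 ∧
    pref ρ (c i + (M i (pref ρ (c i))).length) = pref ρ (c i) ++ M i (pref ρ (c i)) ∧
    c i + (M i (pref ρ (c i))).length < c (i + 1)

section Spoiler

variable (M : ℕ → List (Fin 2) → List (Fin 2)) (B : ℕ → ℕ) (g : ℕ → ℕ → ℕ)

/-- `B i` is meant to bound player 0's `i`-th move and `g L N > L` to start a gap of length `N`
in the set of indices player 0 must hit. -/
def spoilPos : ℕ → List (Fin 2)
  | 0 => [0]
  | i + 1 =>
    let P := padZeros (spoilPos i) (g (spoilPos i).length (B i))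
    P ++ M i P

def spoilCut (i : ℕ) : ℕ := g (spoilPos M B g i).length (B i)

def spoilPad (i : ℕ) : List (Fin 2) := padZeros (spoilPos M B g i) (spoilCut M B g i)

def spoilPlay (n : ℕ) : Fin 2 := (spoilPos M B g n).getD n 0

lemma spoilPos_succ (i : ℕ) :
    spoilPos M B g (i + 1) = spoilPad M B g i ++ M i (spoilPad M B g i) := rfl

lemma spoilPos_prefix_succ (i : ℕ) : spoilPos M B g i <+: spoilPos M B g (i + 1) :=
  (List.prefix_append _ _).trans (List.prefix_append _ _)

lemma spoilPos_prefix {i j : ℕ} (h : i ≤ j) : spoilPos M B g i <+: spoilPos M B g j := by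
  induction j, h using Nat.le_induction with
  | base => exact List.prefix_refl _
  | succ j _ ih => exact ih.trans (spoilPos_prefix_succ M B g j)

lemma spoilPad_prefix (i : ℕ) : spoilPad M B g i <+: spoilPos M B g (i + 1) :=
  List.prefix_append _ _

lemma spoilPos_prefix_spoilPad (i : ℕ) : spoilPos M B g i <+: spoilPad M B g i :=
  List.prefix_append _ _

lemma head_spoilPad (i : ℕ) : (spoilPad M B g i).head? = some 0 := by
  obtain ⟨t, ht⟩ := spoilPos_prefix M B g (Nat.zero_le i)
  simp [spoilPad, padZeros, ← ht, spoilPos]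

variable {g} (hg : ∀ L N, L < g L N)
include hg

lemma length_lt_spoilCut (i : ℕ) : (spoilPos M B g i).length < spoilCut M B g i := hg _ _

lemma length_spoilPad (i : ℕ) : (spoilPad M B g i).length = spoilCut M B g i :=
  length_padZeros (length_lt_spoilCut M B hg i).le

lemma length_spoilPos_succ (i : ℕ) :
    (spoilPos M B g (i + 1)).length = spoilCut M B g i + (M i (spoilPad M B g i)).length := by
  rw [spoilPos_succ, List.length_append, length_spoilPad M B hg]

lemma lt_length_spoilPos (i : ℕ) : i < (spoilPos M B g i).length := by
  induction i with
  | zero => simp [spoilPos]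
  | succ i ih =>
    have := length_lt_spoilCut M B hg i
    rw [length_spoilPos_succ M B hg]
    omega

lemma spoilPlay_eq_getElem {j n : ℕ} (hn : n < (spoilPos M B g j).length) :
    spoilPlay M B g n = (spoilPos M B g j)[n] := by
  have hnn := lt_length_spoilPos M B hg n
  rw [spoilPlay, List.getD_eq_getElem _ _ hnn]
  rcases le_total n j with h | h
  · exact (spoilPos_prefix M B g h).getElem hnn
  · exact ((spoilPos_prefix M B g h).getElem hn).symm

lemma pref_spoilPlay {j m : ℕ} (hm : m ≤ (spoilPos M B g j).length) :
    pref (spoilPlay M B g) m = (spoilPos M B g j).take m :=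
  List.ext_getElem (by simp [pref]; omega) fun n h _ => by
    have hn : n < m := by simpa [pref] using h
    simp only [pref, List.getElem_map, List.getElem_range, List.getElem_take]
    exact spoilPlay_eq_getElem M B hg (by omega)

lemma pref_spoilPlay_spoilCut (i : ℕ) :
    pref (spoilPlay M B g) (spoilCut M B g i) = spoilPad M B g i := by
  have h := spoilPad_prefix M B g i
  have hle : spoilCut M B g i ≤ (spoilPos M B g (i + 1)).length :=
    length_spoilPad M B hg i ▸ h.length_le
  rw [pref_spoilPlay M B hg hle, ← length_spoilPad M B hg i, ← List.prefix_iff_eq_take.mp h]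

lemma spoilPlay_spoilCut_sub_one (i : ℕ) : spoilPlay M B g (spoilCut M B g i - 1) = 0 := by
  have hlt := length_lt_spoilCut M B hg i
  have hlen := length_spoilPad M B hg i
  rw [spoilPlay_eq_getElem M B hg (j := i + 1) (by rw [length_spoilPos_succ M B hg]; omega),
    ← (spoilPad_prefix M B g i).getElem (by omega)]
  exact getElem_padZeros_of_le (by omega) _

lemma isRoundCuts_spoilPlay : IsRoundCuts M (spoilPlay M B g) (spoilCut M B g) := by
  refine ⟨(lt_length_spoilPos M B hg 0).trans (length_lt_spoilCut M B hg 0), fun i => ?_⟩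
  have hlen := length_spoilPos_succ M B hg i
  rw [pref_spoilPlay_spoilCut M B hg]
  refine ⟨spoilPlay_spoilCut_sub_one M B hg i, ?_, ?_⟩
  · rw [← hlen, pref_spoilPlay M B hg le_rfl, List.take_length, spoilPos_succ]
  · rw [← hlen]
    exact length_lt_spoilCut M B hg (i + 1)

variable {T : Set ℕ} (hgap : ∀ L N, Disjoint (Set.Ico (g L N) (g L N + N)) T)
  (hB : ∀ i π, π.head? = some 0 → (M i π).length ≤ B i)
include hgap hB

/-- Player 0's moves fall into the gaps of `T`, everything else is padding by zeros. -/
lemma getElem_spoilPos_of_mem (i m : ℕ) (hm : m < (spoilPos M B g i).length) (hmT : m ∈ T) :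
    (spoilPos M B g i)[m] = 0 := by
  induction i generalizing m with
  | zero => simp [spoilPos] at hm ⊢
  | succ i ih =>
    have hcut := length_spoilPad M B hg i
    rcases lt_or_ge m (spoilPad M B g i).length with hpad | hmove
    · rw [← (spoilPad_prefix M B g i).getElem hpad]
      rcases lt_or_ge m (spoilPos M B g i).length with hold | hnew
      · rw [← (spoilPos_prefix_spoilPad M B g i).getElem hold]
        exact ih m hold hmT
      · exact getElem_padZeros_of_le hnew _
    · have hM := hB i _ (head_spoilPad M B g i)
      have hm' := hm
      rw [length_spoilPos_succ M B hg] at hm'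
      have hcut' : spoilCut M B g i = g (spoilPos M B g i).length (B i) := rfl
      exact ((hgap (spoilPos M B g i).length (B i)).notMem_of_mem_left ⟨by omega, by omega⟩
        hmT).elim

lemma spoilPlay_eq_zero_of_mem {m : ℕ} (hm : m ∈ T) : spoilPlay M B g m = 0 := by
  have h := lt_length_spoilPos M B hg m
  rw [spoilPlay_eq_getElem M B hg h]
  exact getElem_spoilPos_of_mem M B hg hgap hB m m h hm

end Spoiler

lemma exists_play_eq_zero_on_of_gaps {T : Set ℕ}
    (hT : ∀ L N, ∃ g, L < g ∧ Disjoint (Set.Ico g (g + N)) T)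
    (M : ℕ → List (Fin 2) → List (Fin 2)) (B : ℕ → ℕ)
    (hB : ∀ i π, π.head? = some 0 → (M i π).length ≤ B i) :
    ∃ ρ c, IsPlay E2 0 ρ ∧ (∀ m ∈ T, ρ m = 0) ∧ IsRoundCuts M ρ c := by
  choose g hg hgap using hT
  exact ⟨spoilPlay M B g, spoilCut M B g, ⟨rfl, fun _ => trivial⟩,
    fun _ => spoilPlay_eq_zero_of_mem M B hg hgap hB, isRoundCuts_spoilPlay M B hg⟩

lemma exists_play_notMem_W5 (M : ℕ → List (Fin 2) → List (Fin 2)) (B : ℕ → ℕ)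
    (hB : ∀ i π, π.head? = some 0 → (M i π).length ≤ B i) :
    ∃ ρ c, IsPlay E2 0 ρ ∧ ρ ∉ W5 ∧ IsRoundCuts M ρ c := by
  obtain ⟨ρ, c, hplay, hzero, hcuts⟩ := exists_play_eq_zero_on_of_gaps exists_gap_tri M B hB
  exact ⟨ρ, c, hplay, notMem_W5_of_tri hzero, hcuts⟩

end BMGame

open BMGame

/-- In the Banach–Mazur game `(G_{0,1}, 0, W5)`, Player 0 has no positional winning
strategy, no bounded winning strategy, and no move-counting winning strategy. -/
theorem stmt6 :
    (¬ ∃ f : Fin 2 → List (Fin 2), PositionalWinning E2 0 W5 f) ∧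
    (¬ ∃ (f : List (Fin 2) → List (Fin 2)) (b : ℕ), 1 ≤ b ∧
        WinningStrategy E2 0 W5 f ∧ BoundedBy E2 0 b f) ∧
    (¬ ∃ h : Fin 2 → ℕ → List (Fin 2), MoveCountingWinning E2 0 W5 h) := by
  refine ⟨?_, ?_, ?_⟩
  · rintro ⟨f, -, hwin⟩
    obtain ⟨ρ, c, hplay, hW, hc0, hc⟩ :=
      exists_play_notMem_W5 (fun _ _ => f 0) (fun _ => (f 0).length) fun _ _ _ => le_rfl
    refine hW (hwin ρ hplay ⟨c, hc0, fun i => ?_⟩)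
    obtain ⟨h0, hmove⟩ := hc i
    rwa [h0]
  · rintro ⟨f, b, -, ⟨-, hwin⟩, hbound⟩
    obtain ⟨ρ, c, hplay, hW, hc0, hc⟩ :=
      exists_play_notMem_W5 (fun _ => f) (fun _ => b) fun _ π h => hbound π ⟨h, isChain_E2 π⟩
    exact hW (hwin ρ hplay ⟨c, hc0, fun i => (hc i).2⟩)
  · rintro ⟨h, -, hwin⟩
    obtain ⟨ρ, c, hplay, hW, hc0, hc⟩ := exists_play_notMem_W5 (fun i _ => h 0 (i + 1))
      (fun i => (h 0 (i + 1)).length) fun _ _ _ => le_rfl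
    refine hW (hwin ρ hplay ⟨c, hc0, fun i => ?_⟩)
    obtain ⟨h0, hmove⟩ := hc i
    rwa [h0]
end

section
/- Let G=(V,E) be a finite directed graph in which every vertex has at least one outgoing edge, v₀ ∈ V, and let (W_n)_{n≥1} be a sequence of subsets of Paths(G,v₀). If for every n ≥ 1 Player 0 has a positional winning strategy for the Banach–Mazur game (G,v₀,W_n), then Player 0 has a move-counting winning strategy for the Banach–Mazur game (G,v₀,⋂_{n≥1} W_n). -/
/-!
Enumerate the games along the Cantor pairing: at its `m`-th move player 0 plays the positional
winning strategy of game `(Nat.unpair (m - 1)).1`. Every game is thereby served in infinitely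
many rounds, namely the rounds `Nat.pair n 0, Nat.pair n 1, …`, and a play consistent with the
combined strategy, cut only at those rounds, is a play consistent with the `n`-th positional
strategy; hence it lies in every `W n`.
-/

open MeasureTheory
open scoped ENNReal NNReal

namespace BMGame

variable {V : Type*}

lemma strictMono_of_add_lt_succ {c len : ℕ → ℕ} (h : ∀ i, c i + len i < c (i + 1)) :
    StrictMono c :=
  strictMono_nat_of_lt_succ fun i => (Nat.le_add_right _ _).trans_lt (h i)

lemma ConsMoveCounting.consPositional {h : V → ℕ → List V} {f : V → List V} {ρ : ℕ → V}
    (hρ : ConsMoveCounting h ρ) {k : ℕ → ℕ} (hk : StrictMono k)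
    (hkf : ∀ j v, h v (k j + 1) = f v) : ConsPositional f ρ := by
  obtain ⟨c, hc0, hc⟩ := hρ
  have hc_mono := strictMono_of_add_lt_succ fun i => (hc i).2
  refine ⟨c ∘ k, hc0.trans (hc_mono.monotone (Nat.zero_le _)), fun j => ?_⟩
  obtain ⟨hpref, hlt⟩ := hc (k j)
  rw [hkf] at hpref hlt
  exact ⟨hpref, hlt.trans_le (hc_mono.monotone (Nat.succ_le_of_lt (hk (Nat.lt_succ_self j))))⟩

end BMGame

open BMGame

theorem stmt8_general {V : Type*} (E : V → V → Prop) (v₀ : V)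
    (W : ℕ → Set (ℕ → V))
    (hpos : ∀ n, ∃ f : V → List V, PositionalWinning E v₀ (W n) f) :
    ∃ h : V → ℕ → List V, MoveCountingWinning E v₀ (⋂ n, W n) h := by
  choose f hf using hpos
  refine ⟨fun v m => f (Nat.unpair (m - 1)).1 v, fun v _ _ => (hf _).1 v, fun ρ hρ hcons => ?_⟩
  refine Set.mem_iInter.2 fun n => (hf n).2 ρ hρ (hcons.consPositional (k := Nat.pair n) ?_ ?_)
  · exact fun _ _ => Nat.pair_lt_pair_right n
  · intro j v
    simp only [Nat.add_sub_cancel, Nat.unpair_pair]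

/-- If Player 0 has a positional winning strategy for each game `(G, v₀, W n)` on a
finite graph, then Player 0 has a move-counting winning strategy for `(G, v₀, ⋂ n, W n)`. -/
theorem stmt8 {V : Type*} [Fintype V] (E : V → V → Prop) (hE : ∀ v, ∃ u, E v u) (v₀ : V)
    (W : ℕ → Set (ℕ → V)) (hW : ∀ n, W n ⊆ {ρ | IsPlay E v₀ ρ})
    (hpos : ∀ n, ∃ f : V → List V, PositionalWinning E v₀ (W n) f) :
    ∃ h : V → ℕ → List V, MoveCountingWinning E v₀ (⋂ n, W n) h :=
  stmt8_general E v₀ W hpos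
end
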